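/- The irreducible representation ρ and the standard-embedding representation σ of SO(3) are not equivalent: there exists no linear isomorphism T : ℝ³ × ℝ² → Sym₀(ℝ³) such that T ∘ σ(h) = ρ(h) ∘ T for all h ∈ SO(3). -/

import Mathlib

/-!
The representation `σ` contains a trivial summand: every `σ(h)` fixes `(0, w)`. A `ρ`-fixed
`X ∈ Sym₀(ℝ³)` commutes with the quarter turns about the `z`- and `x`-axes; their commutant
consists of the scalar matrices, and a trace-free scalar matrix vanishes. So `ρ` has no nonzero
fixed vector and an intertwining isomorphism cannot exist.
-/

open Matrix

noncomputable section

abbrev MatR (n : ℕ) : Type := Matrix (Fin n) (Fin n) ℝ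

/-- The group `SO(n)` of real `n × n` orthogonal matrices of determinant `1`,
as a subgroup of the orthogonal group. -/
def SO (n : ℕ) : Subgroup (Matrix.orthogonalGroup (Fin n) ℝ) where
  carrier := {A | (A : MatR n).det = 1}
  one_mem' := by simp
  mul_mem' := by
    intro a b ha hb
    simp only [Set.mem_setOf_eq] at *
    push_cast
    rw [det_mul, ha, hb, one_mul]
  inv_mem' := by
    intro a ha
    simp only [Set.mem_setOf_eq] at *
    rw [show ((a⁻¹ : Matrix.orthogonalGroup (Fin n) ℝ) : MatR n) = star (a : MatR n) from rfl,
      Matrix.star_eq_conjTranspose, Matrix.det_conjTranspose, ha, star_one]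

/-- The underlying matrix of an element of `SO n`. -/
def SO.mat {n : ℕ} (h : SO n) : MatR n := h.1.1

/-- The space `Sym₀(ℝ³)` of symmetric trace-free real `3 × 3` matrices. -/
def Sym0 : Submodule ℝ (MatR 3) where
  carrier := {X | Xᵀ = X ∧ X.trace = 0}
  zero_mem' := ⟨transpose_zero, trace_zero _ _⟩
  add_mem' := by
    rintro a b ⟨ha1, ha2⟩ ⟨hb1, hb2⟩
    exact ⟨by rw [transpose_add, ha1, hb1], by rw [trace_add, ha2, hb2, add_zero]⟩
  smul_mem' := by
    rintro c X ⟨h1, h2⟩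
    exact ⟨by rw [transpose_smul, h1], by rw [trace_smul, h2, smul_zero]⟩

/-- The irreducible representation `ρ(h) : X ↦ h X h⁻¹` as a linear endomorphism of `Sym₀(ℝ³)`. -/
def rhoLin (h : SO 3) : Sym0 →ₗ[ℝ] Sym0 where
  toFun X := ⟨SO.mat h * (X : MatR 3) * (SO.mat h)⁻¹, by
    obtain ⟨hs, ht⟩ := X.2
    have hdet : (SO.mat h).det = 1 := h.2
    have hinv : (SO.mat h)⁻¹ = (SO.mat h)ᵀ := by
      refine Matrix.inv_eq_left_inv ?_
      have := h.1.2.1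
      simpa [Matrix.star_eq_conjTranspose, SO.mat] using this
    constructor
    · rw [hinv, Matrix.transpose_mul, Matrix.transpose_mul, Matrix.transpose_transpose, hs,
        Matrix.mul_assoc]
    · rw [Matrix.trace_mul_cycle,
        Matrix.nonsing_inv_mul _ (by rw [hdet]; exact isUnit_one), Matrix.one_mul, ht]⟩
  map_add' := by
    intro X Y
    apply Subtype.ext
    show SO.mat h * ((X : MatR 3) + (Y : MatR 3)) * (SO.mat h)⁻¹ = _
    rw [Matrix.mul_add, Matrix.add_mul]
    rfl
  map_smul' := by
    intro c X
    apply Subtype.ext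
    show SO.mat h * (c • (X : MatR 3)) * (SO.mat h)⁻¹ = _
    rw [Matrix.mul_smul, Matrix.smul_mul]
    rfl

namespace Matrix

theorem commute_of_mul_mul_nonsing_inv_eq {n α : Type*} [Fintype n] [DecidableEq n] [CommRing α]
    {A X : Matrix n n α} (hA : IsUnit A.det) (h : A * X * A⁻¹ = X) : Commute A X :=
  calc A * X = A * X * A⁻¹ * A := (nonsing_inv_mul_cancel_right A (A * X) hA).symm
    _ = X * A := by rw [h]

end Matrix

def rotZ : MatR 3 := !![0, -1, 0; 1, 0, 0; 0, 0, 1]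

def rotX : MatR 3 := !![1, 0, 0; 0, 0, -1; 0, 1, 0]

theorem eq_smul_one_of_commute_rotZ_rotX {X : MatR 3} (hZ : Commute rotZ X)
    (hX : Commute rotX X) : X = X 0 0 • (1 : MatR 3) := by
  have hZX := hZ.eq
  have hXX := hX.eq
  rw [eta_fin_three X] at hZX hXX ⊢
  simp [rotZ, rotX, one_fin_three] at hZX hXX ⊢
  grind

theorem exists_SO_mat_eq {n : ℕ} {A : MatR n} (hA : A * Aᵀ = 1) (hdet : A.det = 1) :
    ∃ h : SO n, SO.mat h = A :=
  ⟨⟨⟨A, (mem_orthogonalGroup_iff _ _).mpr hA⟩, hdet⟩, rfl⟩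

theorem exists_SO_mat_eq_rotZ : ∃ h : SO 3, SO.mat h = rotZ :=
  exists_SO_mat_eq
    (by ext i j; fin_cases i <;> fin_cases j <;> simp [rotZ, mul_apply, Fin.sum_univ_three])
    (by simp [rotZ, det_fin_three])

theorem exists_SO_mat_eq_rotX : ∃ h : SO 3, SO.mat h = rotX :=
  exists_SO_mat_eq
    (by ext i j; fin_cases i <;> fin_cases j <;> simp [rotX, mul_apply, Fin.sum_univ_three])
    (by simp [rotX, det_fin_three])

theorem commute_SO_mat_of_rhoLin_eq {X : Sym0} {h : SO 3} (hX : rhoLin h X = X) :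
    Commute (SO.mat h) X :=
  commute_of_mul_mul_nonsing_inv_eq (by rw [show (SO.mat h).det = 1 from h.2]; exact isUnit_one)
    (congrArg Subtype.val hX)

theorem eq_zero_of_forall_rhoLin_eq {X : Sym0} (hX : ∀ h : SO 3, rhoLin h X = X) : X = 0 := by
  obtain ⟨z, hz⟩ := exists_SO_mat_eq_rotZ
  obtain ⟨x, hx⟩ := exists_SO_mat_eq_rotX
  have hscalar := eq_smul_one_of_commute_rotZ_rotX (hz ▸ commute_SO_mat_of_rhoLin_eq (hX z))
    (hx ▸ commute_SO_mat_of_rhoLin_eq (hX x))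
  have htrace : (X : MatR 3).trace = 0 := X.2.2
  rw [hscalar, trace_smul, trace_one, Fintype.card_fin, smul_eq_mul, mul_eq_zero] at htrace
  have h00 : (X : MatR 3) 0 0 = 0 := htrace.resolve_right (by norm_num)
  exact Subtype.ext (by rw [hscalar, h00, zero_smul, Submodule.coe_zero])

/-- The irreducible representation `ρ` and the standard-embedding representation `σ`,
`σ(h)(v, w) = (h v, w)`, of `SO(3)` are not equivalent: no linear isomorphism
`T : ℝ³ × ℝ² → Sym₀(ℝ³)` intertwines them. -/
theorem rho_not_equivalent_standard :
    ¬ ∃ T : ((Fin 3 → ℝ) × (Fin 2 → ℝ)) ≃ₗ[ℝ] Sym0,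
        ∀ (h : SO 3) (v : Fin 3 → ℝ) (w : Fin 2 → ℝ),
          T ((SO.mat h).mulVec v, w) = rhoLin h (T (v, w)) := by
  rintro ⟨T, hT⟩
  have hfixed : ∀ h : SO 3, rhoLin h (T (0, Pi.single 0 1)) = T (0, Pi.single 0 1) := fun h => by
    rw [← hT, mulVec_zero]
  have hzero : ((0 : Fin 3 → ℝ), (Pi.single 0 1 : Fin 2 → ℝ)) = 0 :=
    T.map_eq_zero_iff.mp (eq_zero_of_forall_rhoLin_eq hfixed)
  simpa using congrFun (congrArg Prod.snd hzero) 0
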